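/- Matrix Laplace Transform Method. Let X be a random d×d Hermitian matrix with normalized trace moment generating function m(θ) := E tr̄ e^{θX} (the expectation assumed to exist where used). Then for each t ∈ ℝ: (i) P(λ_max(X) ≥ t) ≤ d · inf_{θ>0} exp(−θt + log m(θ)); (ii) P(λ_min(X) ≤ t) ≤ d · inf_{θ<0} exp(−θt + log m(θ)); (iii) E λ_max(X) ≤ inf_{θ>0} (1/θ)[log d + log m(θ)]; (iv) E λ_min(X) ≥ sup_{θ<0} (1/θ)[log d + log m(θ)]. -/

import Mathlib

open MeasureTheory
open scoped ComplexOrder Classical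

noncomputable instance {m n : ℕ} : MeasurableSpace (Matrix (Fin m) (Fin n) ℂ) :=
  inferInstanceAs (MeasurableSpace (Fin m → Fin n → ℂ))

/-- The spectral norm (largest singular value) of a complex matrix. -/
noncomputable def specNorm {m n : ℕ} (A : Matrix (Fin m) (Fin n) ℂ) : ℝ :=
  ‖LinearMap.toContinuousLinearMap (Matrix.toEuclideanLin A)‖

/-- The largest eigenvalue of a Hermitian matrix, via the Rayleigh quotient. -/
noncomputable def lmax {d : ℕ} (A : Matrix (Fin d) (Fin d) ℂ) : ℝ :=
  ⨆ x : Metric.sphere (0 : EuclideanSpace ℂ (Fin d)) 1,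
    (inner ℂ ((x : EuclideanSpace ℂ (Fin d))) (Matrix.toEuclideanLin A x) : ℂ).re

/-- The smallest eigenvalue of a Hermitian matrix, via the Rayleigh quotient. -/
noncomputable def lmin {d : ℕ} (A : Matrix (Fin d) (Fin d) ℂ) : ℝ :=
  ⨅ x : Metric.sphere (0 : EuclideanSpace ℂ (Fin d)) 1,
    (inner ℂ ((x : EuclideanSpace ℂ (Fin d))) (Matrix.toEuclideanLin A x) : ℂ).re

/-- The matrix exponential. -/
noncomputable def mexp {d : ℕ} (A : Matrix (Fin d) (Fin d) ℂ) : Matrix (Fin d) (Fin d) ℂ :=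
  NormedSpace.exp A

/-- The Schatten `p`-norm `(tr |B|^p)^(1/p)` of a complex matrix, computed via the
eigenvalues of `Bᴴ * B`. -/
noncomputable def schattenNorm {d : ℕ} (p : ℝ) (B : Matrix (Fin d) (Fin d) ℂ) : ℝ :=
  (∑ i, (Matrix.posSemidef_conjTranspose_mul_self B).isHermitian.eigenvalues i ^ (p / 2)) ^ (1 / p)

/-- The positive-semidefinite square root of a psd matrix (junk value `0` otherwise). -/
noncomputable def psdSqrt {d : ℕ} (M : Matrix (Fin d) (Fin d) ℂ) : Matrix (Fin d) (Fin d) ℂ :=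
  if h : M.PosSemidef then
    h.1.eigenvectorUnitary.1 * Matrix.diagonal ((↑) ∘ (√·) ∘ h.1.eigenvalues) *
      (star h.1.eigenvectorUnitary : Matrix (Fin d) (Fin d) ℂ)
  else 0

/-- The entrywise expectation of a random matrix. -/
noncomputable def matMean {Ω : Type*} [MeasurableSpace Ω] (μ : Measure Ω) {d : ℕ}
    (X : Ω → Matrix (Fin d) (Fin d) ℂ) : Matrix (Fin d) (Fin d) ℂ :=
  Matrix.of fun i j => ∫ ω, X ω i j ∂μ

/-- The normalized trace mgf `θ ↦ 𝔼 tr̄ exp (θ X)` of a random Hermitian matrix. -/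
noncomputable def traceMgf {Ω : Type*} [MeasurableSpace Ω] (μ : Measure Ω) {d : ℕ}
    (X : Ω → Matrix (Fin d) (Fin d) ℂ) (θ : ℝ) : ℝ :=
  ∫ ω, (Matrix.trace (mexp ((θ : ℂ) • X ω))).re / d ∂μ

/-- `(X, X') = (Ψ(Z), Ψ(Z'))` is a matrix Stein pair with scale factor `α`:
`(Z, Z')` is an exchangeable pair, `Ψ` takes Hermitian values,
`𝔼[X - X' ∣ Z] = α X` a.s., `α ∈ (0, 1]`, and `𝔼‖X‖² < ∞`. -/
structure IsMatrixSteinPair {Ω 𝒵 : Type*} [MeasurableSpace Ω] [MeasurableSpace 𝒵]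
    {d : ℕ} (μ : Measure Ω) (Z Z' : Ω → 𝒵) (Ψ : 𝒵 → Matrix (Fin d) (Fin d) ℂ)
    (α : ℝ) : Prop where
  measurable_fst : Measurable Z
  measurable_snd : Measurable Z'
  measurable_psi : ∀ i j, Measurable fun z => Ψ z i j
  hermitian : ∀ z, (Ψ z).IsHermitian
  exchangeable : μ.map (fun ω => (Z ω, Z' ω)) = μ.map fun ω => (Z' ω, Z ω)
  alpha_pos : 0 < α
  alpha_le_one : α ≤ 1
  stein : ∀ i j,
    μ[(fun ω => Ψ (Z ω) i j - Ψ (Z' ω) i j) | MeasurableSpace.comap Z inferInstance]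
      =ᵐ[μ] fun ω => (α : ℂ) * Ψ (Z ω) i j
  memLp_two : ∀ i j, MemLp (fun ω => Ψ (Z ω) i j) 2 μ

/-- The conditional variance `Δ_X = (1/(2α)) 𝔼[(X - X')² ∣ Z]` of a matrix Stein pair,
defined entrywise via conditional expectation with respect to `σ(Z)`. -/
noncomputable def condVar {Ω 𝒵 : Type*} [MeasurableSpace Ω] [MeasurableSpace 𝒵]
    {d : ℕ} (μ : Measure Ω) (Z Z' : Ω → 𝒵) (Ψ : 𝒵 → Matrix (Fin d) (Fin d) ℂ)
    (α : ℝ) : Ω → Matrix (Fin d) (Fin d) ℂ := fun ω =>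
  Matrix.of fun i j => (1 / (2 * α) : ℂ) *
    (μ[(fun ω' => ((Ψ (Z ω') - Ψ (Z' ω')) * (Ψ (Z ω') - Ψ (Z' ω'))) i j)
      | MeasurableSpace.comap Z inferInstance]) ω

/-- `s ↦ s log s` (with `0 log 0 = 0`) applied to the eigenvalues of a Hermitian matrix
(junk value `0` otherwise). -/
noncomputable def matLogSelf {d : ℕ} (M : Matrix (Fin d) (Fin d) ℂ) : Matrix (Fin d) (Fin d) ℂ :=
  if h : M.IsHermitian then h.cfc (fun x => x * Real.log x) else 0

/-! Every eigenvalue `λ` of a Hermitian `A` satisfies `e^{θλ} ≤ tr e^{θA}`, because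
`tr e^{θA} = ∑ᵢ e^{θλᵢ}` is a sum of positive terms, and `λ_max`, `λ_min` are eigenvalues, being
the extreme values of the Rayleigh quotient. Hence `e^{θ λ_max(X)}` is dominated by `tr e^{θX}`,
whose expectation is `d m(θ)`. Markov's inequality applied to `e^{θ λ_max(X)}` gives the tail
bounds, and Jensen's inequality `e^{θ 𝔼 λ_max(X)} ≤ 𝔼 e^{θ λ_max(X)} ≤ d m(θ)` the bounds on the
mean, after dividing by `θ`. -/

section HermitianMatrix

open Matrix

variable {n : Type*} [Fintype n] [DecidableEq n] {A : Matrix n n ℂ}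

theorem Matrix.trace_exp_conjStarAlgAut (u : unitary (Matrix n n ℂ)) (M : Matrix n n ℂ) :
    trace (NormedSpace.exp (Unitary.conjStarAlgAut ℂ _ u M)) = trace (NormedSpace.exp M) := by
  set U := Unitary.toUnits u
  calc trace (NormedSpace.exp (Unitary.conjStarAlgAut ℂ _ u M))
      = trace ((U : Matrix n n ℂ) * NormedSpace.exp M * ↑U⁻¹) := by
        rw [Unitary.conjStarAlgAut_apply]; exact congrArg trace (Matrix.exp_units_conj U M)
    _ = trace (NormedSpace.exp M) := by rw [trace_mul_cycle, Units.inv_mul, one_mul]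

theorem Matrix.IsHermitian.ofReal_smul_eq_conjStarAlgAut (hA : A.IsHermitian) (θ : ℝ) :
    (θ : ℂ) • A = Unitary.conjStarAlgAut ℂ _ hA.eigenvectorUnitary
      (diagonal fun i => ((θ * hA.eigenvalues i : ℝ) : ℂ)) := by
  conv_lhs => rw [hA.spectral_theorem]
  rw [← map_smul, ← diagonal_smul]
  congr 2
  ext i
  simp

theorem Matrix.IsHermitian.re_trace_exp_ofReal_smul (hA : A.IsHermitian) (θ : ℝ) :
    (trace (NormedSpace.exp ((θ : ℂ) • A))).re = ∑ i, Real.exp (θ * hA.eigenvalues i) := by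
  rw [hA.ofReal_smul_eq_conjStarAlgAut, trace_exp_conjStarAlgAut, exp_diagonal, trace_diagonal,
    Complex.re_sum]
  refine Finset.sum_congr rfl fun i _ => ?_
  rw [Pi.exp_def, ← Complex.exp_eq_exp_ℂ, Complex.exp_ofReal_re]

theorem Matrix.IsHermitian.exp_mul_le_re_trace_exp (hA : A.IsHermitian) (θ : ℝ) {l : ℝ}
    (hl : l ∈ Set.range hA.eigenvalues) :
    Real.exp (θ * l) ≤ (trace (NormedSpace.exp ((θ : ℂ) • A))).re := by
  obtain ⟨i, rfl⟩ := hl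
  rw [hA.re_trace_exp_ofReal_smul]
  exact Finset.single_le_sum (f := fun j => Real.exp (θ * hA.eigenvalues j))
    (fun j _ => (Real.exp_pos _).le) (Finset.mem_univ i)

theorem Matrix.IsHermitian.mem_range_eigenvalues_of_hasEigenvalue (hA : A.IsHermitian) {μ : ℝ}
    (hμ : Module.End.HasEigenvalue (toEuclideanLin A) (μ : ℂ)) : μ ∈ Set.range hA.eigenvalues := by
  have h := hμ.mem_spectrum
  rw [spectrum_toLpLin, hA.spectrum_eq_image_range] at h
  obtain ⟨_, ⟨i, rfl⟩, hi⟩ := h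
  exact ⟨i, Complex.ofReal_injective hi⟩

theorem Matrix.IsHermitian.rayleighQuotient_toEuclideanLin (hA : A.IsHermitian)
    {x : EuclideanSpace ℂ n} (hx : x ∈ Metric.sphere 0 1) :
    (LinearMap.toContinuousLinearMap (toEuclideanLin A)).rayleighQuotient x
      = (inner ℂ x (toEuclideanLin A x)).re := by
  rw [ContinuousLinearMap.rayleighQuotient, ContinuousLinearMap.reApplyInnerSelf_apply,
    mem_sphere_zero_iff_norm.mp hx]
  simp [isSymmetric_toEuclideanLin_iff.mpr hA _ _]

end HermitianMatrix

section RayleighExtremes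

open Matrix

variable {d : ℕ} {A : Matrix (Fin d) (Fin d) ℂ}

theorem lmax_mem_range_eigenvalues (hd : 0 < d) (hA : A.IsHermitian) :
    lmax A ∈ Set.range hA.eigenvalues := by
  have : NeZero d := ⟨hd.ne'⟩
  have hsup : lmax A = ⨆ x : { x : EuclideanSpace ℂ (Fin d) // x ≠ 0 },
      (LinearMap.toContinuousLinearMap (toEuclideanLin A)).rayleighQuotient x := by
    rw [ContinuousLinearMap.iSup_rayleigh_eq_iSup_rayleigh_sphere _ one_pos]
    exact iSup_congr fun x => (hA.rayleighQuotient_toEuclideanLin x.2).symm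
  rw [hsup]
  exact hA.mem_range_eigenvalues_of_hasEigenvalue
    (isSymmetric_toEuclideanLin_iff.mpr hA).hasEigenvalue_iSup_of_finiteDimensional

theorem lmin_mem_range_eigenvalues (hd : 0 < d) (hA : A.IsHermitian) :
    lmin A ∈ Set.range hA.eigenvalues := by
  have : NeZero d := ⟨hd.ne'⟩
  have hinf : lmin A = ⨅ x : { x : EuclideanSpace ℂ (Fin d) // x ≠ 0 },
      (LinearMap.toContinuousLinearMap (toEuclideanLin A)).rayleighQuotient x := by
    rw [ContinuousLinearMap.iInf_rayleigh_eq_iInf_rayleigh_sphere _ one_pos]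
    exact iInf_congr fun x => (hA.rayleighQuotient_toEuclideanLin x.2).symm
  rw [hinf]
  exact hA.mem_range_eigenvalues_of_hasEigenvalue
    (isSymmetric_toEuclideanLin_iff.mpr hA).hasEigenvalue_iInf_of_finiteDimensional

end RayleighExtremes

section ExpDomination

open ProbabilityTheory

variable {Ω : Type*} [MeasurableSpace Ω] {μ : Measure Ω} {Y F : Ω → ℝ} {θ : ℝ}

theorem integrable_exp_mul_of_exp_mul_le (hY : AEStronglyMeasurable Y μ) (hF : Integrable F μ)
    (hYF : ∀ ω, Real.exp (θ * Y ω) ≤ F ω) : Integrable (fun ω => Real.exp (θ * Y ω)) μ :=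
  hF.mono' (Real.continuous_exp.comp_aestronglyMeasurable (hY.const_mul θ))
    (.of_forall fun ω => by rw [Real.norm_of_nonneg (Real.exp_pos _).le]; exact hYF ω)

theorem mgf_le_integral_of_exp_mul_le (hY : AEStronglyMeasurable Y μ) (hF : Integrable F μ)
    (hYF : ∀ ω, Real.exp (θ * Y ω) ≤ F ω) : mgf Y μ θ ≤ ∫ ω, F ω ∂μ :=
  integral_mono (integrable_exp_mul_of_exp_mul_le hY hF hYF) hF hYF

theorem measure_ge_le_exp_mul_integral_of_exp_mul_le [IsFiniteMeasure μ] (ε : ℝ) (hθ : 0 ≤ θ)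
    (hY : AEStronglyMeasurable Y μ) (hF : Integrable F μ) (hYF : ∀ ω, Real.exp (θ * Y ω) ≤ F ω) :
    μ.real {ω | ε ≤ Y ω} ≤ Real.exp (-θ * ε) * ∫ ω, F ω ∂μ :=
  (measure_ge_le_exp_mul_mgf ε hθ (integrable_exp_mul_of_exp_mul_le hY hF hYF)).trans
    (by gcongr; exact mgf_le_integral_of_exp_mul_le hY hF hYF)

theorem measure_le_le_exp_mul_integral_of_exp_mul_le [IsFiniteMeasure μ] (ε : ℝ) (hθ : θ ≤ 0)
    (hY : AEStronglyMeasurable Y μ) (hF : Integrable F μ) (hYF : ∀ ω, Real.exp (θ * Y ω) ≤ F ω) :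
    μ.real {ω | Y ω ≤ ε} ≤ Real.exp (-θ * ε) * ∫ ω, F ω ∂μ :=
  (measure_le_le_exp_mul_mgf ε hθ (integrable_exp_mul_of_exp_mul_le hY hF hYF)).trans
    (by gcongr; exact mgf_le_integral_of_exp_mul_le hY hF hYF)

theorem mul_integral_le_log_integral_of_exp_mul_le [IsProbabilityMeasure μ]
    (hY : Integrable Y μ) (hF : Integrable F μ) (hYF : ∀ ω, Real.exp (θ * Y ω) ≤ F ω) :
    θ * ∫ ω, Y ω ∂μ ≤ Real.log (∫ ω, F ω ∂μ) := by
  have hexp := integrable_exp_mul_of_exp_mul_le hY.1 hF hYF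
  have hmgf := mgf_le_integral_of_exp_mul_le hY.1 hF hYF
  rw [Real.le_log_iff_exp_le ((mgf_pos hexp).trans_le hmgf), ← integral_const_mul]
  calc Real.exp (∫ ω, θ * Y ω ∂μ) ≤ mgf Y μ θ :=
        convexOn_exp.map_integral_le Real.continuous_exp.continuousOn isClosed_univ
          (.of_forall fun _ => Set.mem_univ _) (hY.const_mul θ) hexp
    _ ≤ ∫ ω, F ω ∂μ := hmgf

end ExpDomination

section TraceMgf

variable {Ω : Type*} [MeasurableSpace Ω] {μ : Measure Ω} {d : ℕ}
  {X : Ω → Matrix (Fin d) (Fin d) ℂ} {θ : ℝ}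

theorem integral_re_trace_mexp_smul (hd : 0 < d) :
    ∫ ω, (Matrix.trace (mexp ((θ : ℂ) • X ω))).re ∂μ = d * traceMgf μ X θ := by
  rw [traceMgf, integral_div, mul_div_cancel₀ _ (by positivity)]

theorem traceMgf_pos [IsProbabilityMeasure μ] (hd : 0 < d) (hX : ∀ ω, (X ω).IsHermitian)
    (hint : Integrable (fun ω => (Matrix.trace (mexp ((θ : ℂ) • X ω))).re) μ) :
    0 < traceMgf μ X θ := by
  have : NeZero d := ⟨hd.ne'⟩
  have hpos : ∀ ω, 0 < (Matrix.trace (mexp ((θ : ℂ) • X ω))).re / d := fun ω => by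
    rw [mexp, (hX ω).re_trace_exp_ofReal_smul]
    exact div_pos (Finset.sum_pos (fun i _ => Real.exp_pos _) Finset.univ_nonempty) (by positivity)
  have hsupp : Function.support (fun ω => (Matrix.trace (mexp ((θ : ℂ) • X ω))).re / d) = .univ :=
    Set.eq_univ_of_forall fun ω => (hpos ω).ne'
  refine (integral_pos_iff_support_of_nonneg (fun ω => (hpos ω).le) (hint.div_const _)).mpr ?_
  rw [hsupp, measure_univ]
  exact one_pos

end TraceMgf

theorem matrix_laplace_transform_method_general
    {Ω : Type*} [MeasurableSpace Ω] (μ : Measure Ω) [IsProbabilityMeasure μ]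
    {d : ℕ} (hd : 0 < d) (X : Ω → Matrix (Fin d) (Fin d) ℂ)
    (hherm : ∀ ω, (X ω).IsHermitian)
    (hint : ∀ θ : ℝ, Integrable (fun ω => (Matrix.trace (mexp ((θ : ℂ) • X ω))).re) μ)
    (hmaxint : Integrable (fun ω => lmax (X ω)) μ)
    (hminint : Integrable (fun ω => lmin (X ω)) μ) (t : ℝ) :
    (∀ θ : ℝ, 0 < θ →
        (μ {ω | t ≤ lmax (X ω)}).toReal
          ≤ d * Real.exp (-θ * t + Real.log (traceMgf μ X θ))) ∧
    (∀ θ : ℝ, θ < 0 →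
        (μ {ω | lmin (X ω) ≤ t}).toReal
          ≤ d * Real.exp (-θ * t + Real.log (traceMgf μ X θ))) ∧
    (∀ θ : ℝ, 0 < θ →
        ∫ ω, lmax (X ω) ∂μ ≤ (1 / θ) * (Real.log d + Real.log (traceMgf μ X θ))) ∧
    (∀ θ : ℝ, θ < 0 →
        (1 / θ) * (Real.log d + Real.log (traceMgf μ X θ)) ≤ ∫ ω, lmin (X ω) ∂μ) := by
  have hmax : ∀ (θ : ℝ) ω,
      Real.exp (θ * lmax (X ω)) ≤ (Matrix.trace (mexp ((θ : ℂ) • X ω))).re :=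
    fun θ ω => (hherm ω).exp_mul_le_re_trace_exp θ (lmax_mem_range_eigenvalues hd (hherm ω))
  have hmin : ∀ (θ : ℝ) ω,
      Real.exp (θ * lmin (X ω)) ≤ (Matrix.trace (mexp ((θ : ℂ) • X ω))).re :=
    fun θ ω => (hherm ω).exp_mul_le_re_trace_exp θ (lmin_mem_range_eigenvalues hd (hherm ω))
  have hm : ∀ θ : ℝ, 0 < traceMgf μ X θ := fun θ => traceMgf_pos hd hherm (hint θ)
  have hexp : ∀ θ : ℝ, Real.exp (-θ * t) * ∫ ω, (Matrix.trace (mexp ((θ : ℂ) • X ω))).re ∂μ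
      = d * Real.exp (-θ * t + Real.log (traceMgf μ X θ)) := fun θ => by
    rw [integral_re_trace_mexp_smul hd, Real.exp_add, Real.exp_log (hm θ)]
    ring
  have hlog : ∀ θ : ℝ, Real.log (∫ ω, (Matrix.trace (mexp ((θ : ℂ) • X ω))).re ∂μ)
      = Real.log d + Real.log (traceMgf μ X θ) := fun θ => by
    rw [integral_re_trace_mexp_smul hd, Real.log_mul (by positivity) (hm θ).ne']
  refine ⟨fun θ hθ => ?_, fun θ hθ => ?_, fun θ hθ => ?_, fun θ hθ => ?_⟩
  · exact (measure_ge_le_exp_mul_integral_of_exp_mul_le t hθ.le hmaxint.1 (hint θ)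
      (hmax θ)).trans_eq (hexp θ)
  · exact (measure_le_le_exp_mul_integral_of_exp_mul_le t hθ.le hminint.1 (hint θ)
      (hmin θ)).trans_eq (hexp θ)
  · rw [one_div_mul_eq_div, le_div_iff₀' hθ, ← hlog θ]
    exact mul_integral_le_log_integral_of_exp_mul_le hmaxint (hint θ) (hmax θ)
  · rw [one_div_mul_eq_div, div_le_iff_of_neg hθ, mul_comm, ← hlog θ]
    exact mul_integral_le_log_integral_of_exp_mul_le hminint (hint θ) (hmin θ)

/-- **Matrix Laplace Transform Method.**  For a random `d × d` Hermitian matrix `X` with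
normalized trace mgf `m(θ) = 𝔼 tr̄ e^{θX}`: tail bounds for `λ_max` and `λ_min`
(via the infimum over `θ > 0`, resp. `θ < 0`), and bounds on `𝔼 λ_max` and `𝔼 λ_min`. -/
theorem matrix_laplace_transform_method
    {Ω : Type*} [MeasurableSpace Ω] (μ : Measure Ω) [IsProbabilityMeasure μ]
    {d : ℕ} (hd : 0 < d) (X : Ω → Matrix (Fin d) (Fin d) ℂ)
    (hXmeas : ∀ i j, Measurable fun ω => X ω i j)
    (hherm : ∀ ω, (X ω).IsHermitian)
    (hint : ∀ θ : ℝ, Integrable (fun ω => (Matrix.trace (mexp ((θ : ℂ) • X ω))).re) μ)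
    (hmaxint : Integrable (fun ω => lmax (X ω)) μ)
    (hminint : Integrable (fun ω => lmin (X ω)) μ) (t : ℝ) :
    (∀ θ : ℝ, 0 < θ →
        (μ {ω | t ≤ lmax (X ω)}).toReal
          ≤ d * Real.exp (-θ * t + Real.log (traceMgf μ X θ))) ∧
    (∀ θ : ℝ, θ < 0 →
        (μ {ω | lmin (X ω) ≤ t}).toReal
          ≤ d * Real.exp (-θ * t + Real.log (traceMgf μ X θ))) ∧
    (∀ θ : ℝ, 0 < θ →
        ∫ ω, lmax (X ω) ∂μ ≤ (1 / θ) * (Real.log d + Real.log (traceMgf μ X θ))) ∧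
    (∀ θ : ℝ, θ < 0 →
        (1 / θ) * (Real.log d + Real.log (traceMgf μ X θ)) ≤ ∫ ω, lmin (X ω) ∂μ) :=
  matrix_laplace_transform_method_general μ hd X hherm hint hmaxint hminint t
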